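/- arXiv:2602.02013 — 4 statements merged into one kernel-verified Lean document; each statement's English description precedes it below -/
import Mathlib

section
/- (Disagreement scores of an escaping point) Let n ≥ 2, let x_1,…,x_n ∈ ℝ^m, fix an index k and a nonzero vector v ∈ ℝ^m, and for t > 0 consider the configuration obtained by replacing x_k with x_k + t·v, with Euclidean dissimilarity. Let Δ_i(t) denote the normalized disagreement scores of this configuration. Then lim_{t→∞} Δ_k(t) = 1/2, and for every i ≠ k, lim_{t→∞} Δ_i(t) = 1/(2(n−1)). -/
open Finset Filter

/-!
Moving `x k` to `x k + t • v` adds `t • e` to the configuration, where `e = Pi.single k v`.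
Hence, for the moved configuration `y`, `‖y p - y q‖ / t → ‖e p - e q‖`, which is `‖v‖` when
exactly one of `p, q` is `k` and `0` otherwise. Dividing numerator and denominator of the score
by `t`, the row sum of `k` tends to `(n - 1)‖v‖`, every other row sum to `‖v‖`, and the total
to `2(n - 1)‖v‖`.
-/

/-- Normalized disagreement scores of a configuration in `ℝ^m` with Euclidean
dissimilarity. -/
noncomputable def snapScore (n m : ℕ) (x : Fin n → EuclideanSpace ℝ (Fin m))
    (i : Fin n) : ℝ :=
  (∑ j, ‖x i - x j‖) / (∑ p, ∑ q, ‖x p - x q‖)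

theorem Function.update_add_eq_add_single {ι M : Type*} [DecidableEq ι] [AddZeroClass M]
    (x : ι → M) (k : ι) (a : M) :
    Function.update x k (x k + a) = x + Pi.single k a := by
  ext1 p
  rcases eq_or_ne p k with rfl | hp
  · simp
  · simp [hp]

theorem tendsto_div_sum_of_tendsto_div_atTop {ι : Type*} [Fintype ι] (r : ι → ℝ → ℝ)
    (R : ι → ℝ) (hr : ∀ p, Tendsto (fun t => r p t / t) atTop (nhds (R p)))
    (hR : ∑ p, R p ≠ 0) (i : ι) :
    Tendsto (fun t => r i t / ∑ p, r p t) atTop (nhds (R i / ∑ p, R p)) := by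
  have hsum : Tendsto (fun t => (∑ p, r p t) / t) atTop (nhds (∑ p, R p)) := by
    simpa only [sum_div] using tendsto_finsetSum _ fun p _ => hr p
  refine ((hr i).div hsum hR).congr' ?_
  filter_upwards [eventually_gt_atTop (0 : ℝ)] with t ht
  exact div_div_div_cancel_right₀ ht.ne' _ _

section

variable {ι E : Type*} [DecidableEq ι] [Fintype ι] [SeminormedAddCommGroup E]

theorem sum_norm_single_sub_single (k : ι) (v : E) (p : ι) :
    ∑ q, ‖(Pi.single k v : ι → E) p - (Pi.single k v : ι → E) q‖
      = if p = k then ((Fintype.card ι : ℝ) - 1) * ‖v‖ else ‖v‖ := by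
  rw [Fintype.sum_eq_add_sum_compl k]
  rcases eq_or_ne p k with rfl | hp
  · have hrest : ∀ q ∈ ({p}ᶜ : Finset ι),
        ‖(Pi.single p v : ι → E) p - (Pi.single p v : ι → E) q‖ = ‖v‖ := fun q hq => by
      rw [Pi.single_eq_same, Pi.single_eq_of_ne (by simpa using hq), sub_zero]
    rw [sum_congr rfl hrest, sum_const, card_compl, card_singleton, nsmul_eq_mul,
      Nat.cast_sub (Fintype.card_pos_iff.2 ⟨p⟩), if_pos rfl]
    simp
  · have hrest : ∀ q ∈ ({k}ᶜ : Finset ι),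
        ‖(Pi.single k v : ι → E) p - (Pi.single k v : ι → E) q‖ = 0 := fun q hq => by
      rw [Pi.single_eq_of_ne hp, Pi.single_eq_of_ne (by simpa using hq), sub_zero, norm_zero]
    rw [sum_congr rfl hrest]
    simp [hp]

theorem sum_sum_norm_single_sub_single (k : ι) (v : E) :
    ∑ p, ∑ q, ‖(Pi.single k v : ι → E) p - (Pi.single k v : ι → E) q‖
      = 2 * ((Fintype.card ι : ℝ) - 1) * ‖v‖ := by
  simp_rw [sum_norm_single_sub_single]
  have hrest : ∀ p ∈ ({k}ᶜ : Finset ι),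
      (if p = k then ((Fintype.card ι : ℝ) - 1) * ‖v‖ else ‖v‖) = ‖v‖ := fun p hp =>
    if_neg (by simpa using hp)
  rw [Fintype.sum_eq_add_sum_compl k, if_pos rfl, sum_congr rfl hrest, sum_const, card_compl,
    card_singleton, nsmul_eq_mul, Nat.cast_sub (Fintype.card_pos_iff.2 ⟨k⟩), Nat.cast_one]
  ring

end

section

variable {E : Type*} [SeminormedAddCommGroup E] [NormedSpace ℝ E]

theorem tendsto_norm_add_smul_div_atTop (a v : E) :
    Tendsto (fun t : ℝ => ‖a + t • v‖ / t) atTop (nhds ‖v‖) := by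
  have hlim : Tendsto (fun t : ℝ => ‖t⁻¹ • a + v‖) atTop (nhds ‖(0 : ℝ) • a + v‖) :=
    ((tendsto_inv_atTop_zero.smul_const a).add_const v).norm
  rw [zero_smul, zero_add] at hlim
  refine hlim.congr' ?_
  filter_upwards [eventually_gt_atTop (0 : ℝ)] with t ht
  have hscale : a + t • v = t • (t⁻¹ • a + v) := by
    rw [smul_add, smul_inv_smul₀ ht.ne']
  rw [hscale, norm_smul, Real.norm_of_nonneg ht.le, mul_div_cancel_left₀ _ ht.ne']

theorem tendsto_norm_sub_update_add_smul_div_atTop {ι : Type*} [DecidableEq ι] (x : ι → E)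
    (k : ι) (v : E) (p q : ι) :
    Tendsto (fun t : ℝ => ‖Function.update x k (x k + t • v) p
        - Function.update x k (x k + t • v) q‖ / t) atTop
      (nhds ‖(Pi.single k v : ι → E) p - (Pi.single k v : ι → E) q‖) := by
  simp only [Function.update_add_eq_add_single, Pi.single_smul, Pi.add_apply, Pi.smul_apply]
  convert tendsto_norm_add_smul_div_atTop (x p - x q)
    ((Pi.single k v : ι → E) p - (Pi.single k v : ι → E) q) using 3
  rw [smul_sub]
  congr 1
  abel

end

/-- Disagreement scores of an escaping point: if `x_k` is moved to `x_k + t·v` with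
`v ≠ 0` and `t → ∞`, then its normalized disagreement score tends to `1/2`, while the
score of every other point tends to `1/(2(n−1))`. -/
theorem snap_escaping_point_scores (n m : ℕ) (hn : 2 ≤ n)
    (x : Fin n → EuclideanSpace ℝ (Fin m))
    (k : Fin n) (v : EuclideanSpace ℝ (Fin m)) (hv : v ≠ 0) :
    Tendsto (fun t : ℝ => snapScore n m (Function.update x k (x k + t • v)) k)
        atTop (nhds (1 / 2))
    ∧ ∀ i, i ≠ k →
      Tendsto (fun t : ℝ => snapScore n m (Function.update x k (x k + t • v)) i)
        atTop (nhds (1 / (2 * ((n : ℝ) - 1)))) := by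
  have hn' : (0 : ℝ) < n - 1 := by
    have : (2 : ℝ) ≤ n := by exact_mod_cast hn
    linarith
  have hv' : 0 < ‖v‖ := norm_pos_iff.2 hv
  have hscore : ∀ i, Tendsto (fun t : ℝ => snapScore n m (Function.update x k (x k + t • v)) i)
      atTop (nhds ((∑ j, ‖(Pi.single k v : Fin n → _) i - (Pi.single k v : Fin n → _) j‖)
        / (2 * ((n : ℝ) - 1) * ‖v‖))) := by
    intro i
    have hrow p := tendsto_finsetSum univ fun q _ =>
      tendsto_norm_sub_update_add_smul_div_atTop x k v p q
    simp only [← sum_div] at hrow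
    have htotal : ∑ p, ∑ q, ‖(Pi.single k v : Fin n → _) p - (Pi.single k v : Fin n → _) q‖
        = 2 * ((n : ℝ) - 1) * ‖v‖ := by
      rw [sum_sum_norm_single_sub_single, Fintype.card_fin]
    rw [← htotal]
    exact tendsto_div_sum_of_tendsto_div_atTop _ _ hrow (htotal ▸ by positivity) i
  refine ⟨?_, fun i hi => ?_⟩
  · convert hscore k using 2
    rw [sum_norm_single_sub_single, if_pos rfl, Fintype.card_fin]
    field_simp
  · convert hscore i using 2
    rw [sum_norm_single_sub_single, if_neg hi]
    field_simp
end

section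
/- (Suppression of Outlier Weights, limit form) Let n ≥ 2, let x_1,…,x_n ∈ ℝ^m, fix an index k and a nonzero vector v ∈ ℝ^m, and for t > 0 consider the configuration obtained by replacing x_k with x_k + t·v, with Euclidean dissimilarity. Let κ : ℝ → ℝ be continuous and positive, and let w_k(t) be the SNAP agreement weight of index k for this configuration. Then lim_{t→∞} w_k(t) = κ(1/2) / ( κ(1/2) + (n−1)·κ(1/(2(n−1))) ). -/
open Finset Filter

/-- SNAP agreement weight of index `i` for dissimilarity `d` and kernel `κ`. -/
noncomputable def snapWeight (n : ℕ) (d : Fin n → Fin n → ℝ) (κ : ℝ → ℝ) (i : Fin n) : ℝ :=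
  κ ((∑ j, d i j) / (∑ p, ∑ q, d p q)) / ∑ j, κ ((∑ l, d j l) / (∑ p, ∑ q, d p q))

/-! SNAP weights depend only on ratios of distance sums, so rescaling the moved configuration by
`1 / t` does not change them. The rescaled configuration tends to the one with every point at `0`
except the `k`-th at `v`; there the distance sums are `(n - 1)‖v‖` along row `k`, `‖v‖` along
every other row and `2(n - 1)‖v‖` in total, and the weights are continuous wherever the total is
nonzero. -/

open Topology

theorem tendsto_inv_smul_update_add_smul {ι E : Type*} [DecidableEq ι] [NormedAddCommGroup E]
    [NormedSpace ℝ E] (x : ι → E) (k : ι) (v : E) :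
    Tendsto (fun t : ℝ => t⁻¹ • Function.update x k (x k + t • v)) atTop
      (𝓝 (Pi.single k v)) := by
  have hinv (p : ι) : Tendsto (fun t : ℝ => t⁻¹ • x p) atTop (𝓝 0) := by
    simpa using (tendsto_inv_atTop_zero (𝕜 := ℝ)).smul_const (x p)
  refine tendsto_pi_nhds.2 fun p => ?_
  rcases eq_or_ne p k with rfl | hp
  · have hshift : Tendsto (fun t : ℝ => t⁻¹ • x p + v) atTop (𝓝 v) := by
      simpa using (hinv p).add_const v
    rw [Pi.single_eq_same]
    refine hshift.congr' ?_
    filter_upwards [eventually_ne_atTop 0] with t ht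
    simp [smul_add, smul_smul, ht]
  · simpa [hp] using hinv p

section Single

variable {ι E : Type*} [DecidableEq ι] [Fintype ι] [SeminormedAddCommGroup E]

theorem sum_norm_single_self_sub (k : ι) (v : E) :
    ∑ q, ‖(Pi.single k v : ι → E) k - (Pi.single k v : ι → E) q‖
      = (Fintype.card ι - 1) * ‖v‖ := by
  rw [← Finset.add_sum_erase _ _ (mem_univ k),
    Finset.sum_congr rfl fun q hq => by rw [Pi.single_eq_of_ne (ne_of_mem_erase hq)]]
  simp [card_erase_of_mem, Nat.cast_pred (Fintype.card_pos_iff.2 ⟨k⟩)]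

theorem sum_norm_single_sub_of_ne {k p : ι} (hp : p ≠ k) (v : E) :
    ∑ q, ‖(Pi.single k v : ι → E) p - (Pi.single k v : ι → E) q‖ = ‖v‖ := by
  simp [Pi.single_eq_of_ne hp, Pi.single_apply, apply_ite]

theorem sum_sum_norm_single_sub (k : ι) (v : E) :
    ∑ p, ∑ q, ‖(Pi.single k v : ι → E) p - (Pi.single k v : ι → E) q‖
      = 2 * (Fintype.card ι - 1) * ‖v‖ := by
  rw [← Finset.add_sum_erase _ _ (mem_univ k), sum_norm_single_self_sub,
    Finset.sum_congr rfl fun p hp => sum_norm_single_sub_of_ne (ne_of_mem_erase hp) v]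
  simp [card_erase_of_mem, Nat.cast_pred (Fintype.card_pos_iff.2 ⟨k⟩)]
  ring

end Single

section Weight

variable {n : ℕ}

theorem snapWeight_const_mul (d : Fin n → Fin n → ℝ) (κ : ℝ → ℝ) (i : Fin n) {c : ℝ}
    (hc : c ≠ 0) : snapWeight n (fun p q => c * d p q) κ i = snapWeight n d κ i := by
  simp only [snapWeight, ← Finset.mul_sum, mul_div_mul_left _ _ hc]

theorem continuousAt_snapWeight {κ : ℝ → ℝ} (hκ : Continuous κ) (hκpos : ∀ t, 0 < κ t)
    (i : Fin n) {d : Fin n → Fin n → ℝ} (hd : ∑ p, ∑ q, d p q ≠ 0) :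
    ContinuousAt (fun d => snapWeight n d κ i) d := by
  have hratio (j : Fin n) :
      ContinuousAt (fun d : Fin n → Fin n → ℝ => (∑ l, d j l) / ∑ p, ∑ q, d p q) d := by
    fun_prop (disch := exact hd)
  exact (hκ.continuousAt.comp (hratio i)).div
    (tendsto_finsetSum _ fun j _ => hκ.continuousAt.comp (hratio j))
    (Finset.sum_pos (fun j _ => hκpos _) ⟨i, mem_univ i⟩).ne'

theorem snapWeight_norm_smul_sub {E : Type*} [SeminormedAddCommGroup E] [NormedSpace ℝ E]
    (y : Fin n → E) (κ : ℝ → ℝ) (i : Fin n) {c : ℝ} (hc : c ≠ 0) :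
    snapWeight n (fun p q => ‖(c • y) p - (c • y) q‖) κ i
      = snapWeight n (fun p q => ‖y p - y q‖) κ i := by
  simp only [Pi.smul_apply, ← smul_sub, norm_smul]
  exact snapWeight_const_mul _ κ i (norm_ne_zero_iff.2 hc)

theorem snapWeight_single {E : Type*} [NormedAddCommGroup E] (hn : 2 ≤ n) {v : E} (hv : v ≠ 0)
    (κ : ℝ → ℝ) (k : Fin n) :
    snapWeight n (fun p q => ‖(Pi.single k v : Fin n → E) p - (Pi.single k v : Fin n → E) q‖) κ k
      = κ (1 / 2) / (κ (1 / 2) + ((n : ℝ) - 1) * κ (1 / (2 * ((n : ℝ) - 1)))) := by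
  have hv' : 0 < ‖v‖ := norm_pos_iff.2 hv
  have hn' : (0 : ℝ) < n - 1 := by
    have : (2 : ℝ) ≤ n := by exact_mod_cast hn
    linarith
  have hratio (j : Fin n) :
      (∑ q, ‖(Pi.single k v : Fin n → E) j - (Pi.single k v : Fin n → E) q‖)
        / ∑ p, ∑ q, ‖(Pi.single k v : Fin n → E) p - (Pi.single k v : Fin n → E) q‖
      = if j = k then 1 / 2 else 1 / (2 * ((n : ℝ) - 1)) := by
    rw [sum_sum_norm_single_sub, Fintype.card_fin]
    split_ifs with hj
    · rw [hj, sum_norm_single_self_sub, Fintype.card_fin]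
      field_simp
    · rw [sum_norm_single_sub_of_ne hj]
      field_simp
  simp only [snapWeight, hratio]
  rw [← Finset.add_sum_erase _ _ (mem_univ k),
    Finset.sum_congr rfl fun j hj => by rw [if_neg (ne_of_mem_erase hj)]]
  simp [card_erase_of_mem, Nat.cast_pred (by omega : 0 < n)]

end Weight

/-- Suppression of Outlier Weights (limit form): if `x_k` is moved to `x_k + t·v` with
`v ≠ 0` and `t → ∞`, then for a continuous positive kernel `κ` the SNAP agreement weight
of `k` tends to `κ(1/2) / (κ(1/2) + (n−1)·κ(1/(2(n−1))))`. -/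
theorem snap_outlier_weight_limit (n m : ℕ) (hn : 2 ≤ n)
    (x : Fin n → EuclideanSpace ℝ (Fin m))
    (k : Fin n) (v : EuclideanSpace ℝ (Fin m)) (hv : v ≠ 0)
    (κ : ℝ → ℝ) (hκcont : Continuous κ) (hκpos : ∀ t, 0 < κ t) :
    Tendsto
      (fun t : ℝ =>
        snapWeight n
          (fun p q => ‖Function.update x k (x k + t • v) p
                      - Function.update x k (x k + t • v) q‖) κ k)
      atTop
      (nhds (κ (1 / 2) / (κ (1 / 2) + ((n : ℝ) - 1) * κ (1 / (2 * ((n : ℝ) - 1)))))) := by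
  have hsingle :
      ∑ p, ∑ q, ‖(Pi.single k v : Fin n → _) p - (Pi.single k v : Fin n → _) q‖ ≠ 0 := by
    have : (1 : ℝ) < n := by exact_mod_cast hn
    rw [sum_sum_norm_single_sub, Fintype.card_fin]
    exact (mul_pos (by linarith) (norm_pos_iff.2 hv)).ne'
  have hdist :
      Continuous fun (y : Fin n → EuclideanSpace ℝ (Fin m)) (p q : Fin n) => ‖y p - y q‖ := by
    fun_prop
  have hlim := (continuousAt_snapWeight hκcont hκpos k hsingle).tendsto.comp
    ((hdist.tendsto _).comp (tendsto_inv_smul_update_add_smul x k v))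
  rw [snapWeight_single hn hv] at hlim
  refine hlim.congr' ?_
  filter_upwards [eventually_gt_atTop 0] with t ht
  exact snapWeight_norm_smul_sub _ κ k (inv_ne_zero ht.ne')
end

section
/- (Exponential Suppression of Outlier Weights, Laplacian kernel) In the SNAP setup, let I ⊆ {1,…,n} be a set of indices (inliers), let k ∉ I, let α > 0 with |I| ≥ α·n and α·n > 0, and let c₀ > 0. Assume the linear disagreement gap: for every i ∈ I, D_k − D_i ≥ c₀·n. Then for the kernel κ(x) = exp(−x/σ) with σ > 0, the SNAP agreement weight of k satisfies w_k ≤ (1/(α n)) · exp( −c₀ n / (σ D_a) ). -/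
open Finset

/-!
Each inlier's kernel value dominates the outlier's by the factor `B = exp(c₀n/(σ D_a))`,
since the Laplacian kernel turns the additive gap `Δ_k − Δ_i ≥ c₀n/D_a` into a
multiplicative one. Hence the normalising sum is at least `|I| · κ(Δ_k) · B ≥ αn · κ(Δ_k) · B`,
and `w_k ≤ 1/(αn B)`.
-/

theorem div_sum_le_inv_card_mul {ι : Type*} [Fintype ι] {f : ι → ℝ} (hf : ∀ j, 0 < f j)
    {k : ι} {I : Finset ι} (hI : I.Nonempty) {B : ℝ} (hB : 0 < B)
    (hdom : ∀ i ∈ I, f k * B ≤ f i) :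
    f k / ∑ j, f j ≤ (#I * B)⁻¹ := by
  have hsum : #I * (f k * B) ≤ ∑ j, f j :=
    calc #I * (f k * B) = ∑ _i ∈ I, f k * B := by rw [sum_const, nsmul_eq_mul]
      _ ≤ ∑ i ∈ I, f i := sum_le_sum hdom
      _ ≤ ∑ j, f j := sum_le_sum_of_subset_of_nonneg (subset_univ I) fun j _ _ => (hf j).le
  have hcard : (0 : ℝ) < #I := by exact_mod_cast hI.card_pos
  calc f k / ∑ j, f j ≤ f k / (#I * (f k * B)) :=
        div_le_div_of_nonneg_left (hf k).le (by have := hf k; positivity) hsum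
    _ = (#I * B)⁻¹ := by field_simp [(hf k).ne']

theorem snapWeight_le_inv_card_mul {n : ℕ} (d : Fin n → Fin n → ℝ) {κ : ℝ → ℝ}
    (hκ : ∀ x, 0 < κ x) {k : Fin n} {I : Finset (Fin n)} (hI : I.Nonempty) {B : ℝ} (hB : 0 < B)
    (hdom : ∀ i ∈ I, κ ((∑ j, d k j) / ∑ p, ∑ q, d p q) * B
      ≤ κ ((∑ j, d i j) / ∑ p, ∑ q, d p q)) :
    snapWeight n d κ k ≤ (#I * B)⁻¹ :=
  div_sum_le_inv_card_mul (f := fun i => κ ((∑ j, d i j) / ∑ p, ∑ q, d p q))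
    (fun _ => hκ _) hI hB hdom

theorem exp_neg_div_mul_exp_div_le {a b g σ : ℝ} (hσ : 0 < σ) (h : g ≤ a - b) :
    Real.exp (-a / σ) * Real.exp (g / σ) ≤ Real.exp (-b / σ) := by
  rw [← Real.exp_add, Real.exp_le_exp, ← add_div]
  gcongr
  linarith

theorem snap_exponential_suppression_laplacian_general (n : ℕ)
    (d : Fin n → Fin n → ℝ)
    (hDa : 0 < ∑ p, ∑ q, d p q)
    (I : Finset (Fin n)) (k : Fin n)
    (α : ℝ) (hcard : α * n ≤ (I.card : ℝ)) (hαn : 0 < α * n)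
    (c₀ : ℝ)
    (hgap : ∀ i ∈ I, c₀ * n ≤ (∑ j, d k j) - (∑ j, d i j))
    (σ : ℝ) (hσ : 0 < σ) :
    snapWeight n d (fun t => Real.exp (-t / σ)) k
      ≤ (1 / (α * n)) * Real.exp (-(c₀ * n) / (σ * (∑ p, ∑ q, d p q))) := by
  set Da := ∑ p, ∑ q, d p q
  have hI : I.Nonempty := card_pos.mp (by exact_mod_cast hαn.trans_le hcard)
  have hdom : ∀ i ∈ I, Real.exp (-((∑ j, d k j) / Da) / σ) * Real.exp (c₀ * n / Da / σ)
      ≤ Real.exp (-((∑ j, d i j) / Da) / σ) := fun i hi =>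
    exp_neg_div_mul_exp_div_le hσ (by rw [← sub_div]; gcongr; exact hgap i hi)
  calc snapWeight n d (fun t => Real.exp (-t / σ)) k
      ≤ (#I * Real.exp (c₀ * n / Da / σ))⁻¹ :=
        snapWeight_le_inv_card_mul d (fun _ => Real.exp_pos _) hI (Real.exp_pos _) hdom
    _ ≤ (α * n * Real.exp (c₀ * n / Da / σ))⁻¹ := by gcongr
    _ = 1 / (α * n) * Real.exp (-(c₀ * n) / (σ * Da)) := by
        rw [neg_div, Real.exp_neg, div_div, mul_comm Da σ]
        field_simp

/-- Exponential Suppression of Outlier Weights, Laplacian kernel `κ(x) = exp(−x/σ)`: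
under the linear disagreement gap `D_k − D_i ≥ c₀·n` for all inliers `i ∈ I`, the SNAP
weight of the outlier `k` satisfies `w_k ≤ (1/(αn))·exp(−c₀n/(σ·D_a))`. -/
theorem snap_exponential_suppression_laplacian (n : ℕ)
    (d : Fin n → Fin n → ℝ)
    (hd_nonneg : ∀ i j, 0 ≤ d i j)
    (hd_diag : ∀ i, d i i = 0)
    (hDa : 0 < ∑ p, ∑ q, d p q)
    (I : Finset (Fin n)) (k : Fin n) (hk : k ∉ I)
    (α : ℝ) (hα : 0 < α) (hcard : α * n ≤ (I.card : ℝ)) (hαn : 0 < α * n)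
    (c₀ : ℝ) (hc₀ : 0 < c₀)
    (hgap : ∀ i ∈ I, c₀ * n ≤ (∑ j, d k j) - (∑ j, d i j))
    (σ : ℝ) (hσ : 0 < σ) :
    snapWeight n d (fun t => Real.exp (-t / σ)) k
      ≤ (1 / (α * n)) * Real.exp (-(c₀ * n) / (σ * (∑ p, ∑ q, d p q))) :=
  snap_exponential_suppression_laplacian_general n d hDa I k α hcard hαn c₀ hgap σ hσ
end

section
/- (Exponential Suppression of Outlier Weights, Gaussian kernel) In the SNAP setup, let I ⊆ {1,…,n} be a set of indices (inliers), let k ∉ I, let α > 0 with |I| ≥ α·n and α·n > 0, and let c₀ > 0. Assume the linear disagreement gap: for every i ∈ I, D_k − D_i ≥ c₀·n. Then for the kernel κ(x) = exp(−x²/σ²) with σ > 0, the SNAP agreement weight of k satisfies w_k ≤ (1/(α n)) · exp( −(c₀ n / D_a)² / σ² ). -/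
/-!
Every inlier `i` has `Δ_k ≥ Δ_i + g` with `g = c₀ n / D_a ≥ 0` and `Δ_i ≥ 0`, hence
`Δ_k² ≥ Δ_i² + g²`, so the Gaussian kernel gives `κ(Δ_i) ≥ exp(g²/σ²) κ(Δ_k)`. The normalizing
sum contains at least `α n` such inlier terms, which bounds `w_k` by `(α n exp(g²/σ²))⁻¹`.
-/

open Finset

/-- The paper's `Δ_i = D_i / D_a`. -/
noncomputable def snapDisagreement (n : ℕ) (d : Fin n → Fin n → ℝ) (i : Fin n) : ℝ :=
  (∑ j, d i j) / ∑ p, ∑ q, d p q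

theorem snapWeight_eq (n : ℕ) (d : Fin n → Fin n → ℝ) (κ : ℝ → ℝ) (i : Fin n) :
    snapWeight n d κ i
      = κ (snapDisagreement n d i) / ∑ j, κ (snapDisagreement n d j) :=
  rfl

theorem snapDisagreement_nonneg {n : ℕ} {d : Fin n → Fin n → ℝ} (hd : ∀ i j, 0 ≤ d i j)
    (i : Fin n) : 0 ≤ snapDisagreement n d i :=
  div_nonneg (sum_nonneg fun j _ => hd i j) (sum_nonneg fun p _ => sum_nonneg fun q _ => hd p q)

theorem div_le_snapDisagreement_sub {n : ℕ} {d : Fin n → Fin n → ℝ}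
    (hDa : 0 < ∑ p, ∑ q, d p q) {c : ℝ} {i k : Fin n}
    (hgap : c ≤ (∑ j, d k j) - ∑ j, d i j) :
    c / (∑ p, ∑ q, d p q) ≤ snapDisagreement n d k - snapDisagreement n d i := by
  rw [snapDisagreement, snapDisagreement, ← sub_div]
  exact div_le_div_of_nonneg_right hgap hDa.le

theorem div_sum_le_of_forall_mem_mul_le {ι : Type*} [Fintype ι] {f : ι → ℝ}
    (hf : ∀ i, 0 ≤ f i) {I : Finset ι} {m E : ℝ} (hm : 0 < m) (hE : 0 < E)
    (hcard : m ≤ #I) {k : ι} (hk : ∀ i ∈ I, E * f k ≤ f i) :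
    f k / ∑ i, f i ≤ m⁻¹ * E⁻¹ := by
  have hsum : m * (E * f k) ≤ ∑ i, f i :=
    calc m * (E * f k) ≤ #I * (E * f k) :=
          mul_le_mul_of_nonneg_right hcard (mul_nonneg hE.le (hf k))
      _ ≤ ∑ i ∈ I, f i := by simpa only [nsmul_eq_mul] using card_nsmul_le_sum I f _ hk
      _ ≤ ∑ i, f i := sum_le_univ_sum_of_nonneg hf
  refine div_le_of_le_mul₀ (sum_nonneg fun i _ => hf i) (by positivity) ?_
  calc f k = m⁻¹ * E⁻¹ * (m * (E * f k)) := by field_simp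
    _ ≤ m⁻¹ * E⁻¹ * ∑ i, f i := by gcongr

theorem Real.exp_sq_div_mul_exp_neg_sq_div_le {x y g : ℝ} (hx : 0 ≤ x) (hg : 0 ≤ g)
    (hxy : x + g ≤ y) (s : ℝ) :
    Real.exp (g ^ 2 / s ^ 2) * Real.exp (-y ^ 2 / s ^ 2) ≤ Real.exp (-x ^ 2 / s ^ 2) := by
  have hsq : g ^ 2 + x ^ 2 ≤ y ^ 2 := by nlinarith [mul_nonneg hx hg]
  rw [← Real.exp_add, Real.exp_le_exp, ← add_div]
  exact div_le_div_of_nonneg_right (by linarith) (sq_nonneg s)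

theorem snap_exponential_suppression_gaussian_general (n : ℕ)
    (d : Fin n → Fin n → ℝ)
    (hd_nonneg : ∀ i j, 0 ≤ d i j)
    (hDa : 0 < ∑ p, ∑ q, d p q)
    (I : Finset (Fin n)) (k : Fin n)
    (α : ℝ) (hcard : α * n ≤ (I.card : ℝ)) (hαn : 0 < α * n)
    (c₀ : ℝ) (hc₀ : 0 < c₀)
    (hgap : ∀ i ∈ I, c₀ * n ≤ (∑ j, d k j) - (∑ j, d i j))
    (σ : ℝ) :
    snapWeight n d (fun t => Real.exp (-t ^ 2 / σ ^ 2)) k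
      ≤ (1 / (α * n)) * Real.exp (-((c₀ * n) / (∑ p, ∑ q, d p q)) ^ 2 / σ ^ 2) := by
  set g := c₀ * n / ∑ p, ∑ q, d p q
  have hg : 0 ≤ g := div_nonneg (mul_nonneg hc₀.le n.cast_nonneg) hDa.le
  have hinlier : ∀ i ∈ I,
      Real.exp (g ^ 2 / σ ^ 2) * Real.exp (-snapDisagreement n d k ^ 2 / σ ^ 2) ≤
        Real.exp (-snapDisagreement n d i ^ 2 / σ ^ 2) := fun i hi =>
    Real.exp_sq_div_mul_exp_neg_sq_div_le (snapDisagreement_nonneg hd_nonneg i) hg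
      (by linarith [div_le_snapDisagreement_sub hDa (hgap i hi)]) σ
  rw [snapWeight_eq, one_div, neg_div _ (g ^ 2), Real.exp_neg]
  exact div_sum_le_of_forall_mem_mul_le
    (f := fun i => Real.exp (-snapDisagreement n d i ^ 2 / σ ^ 2))
    (fun i => (Real.exp_pos _).le) hαn (Real.exp_pos _) hcard hinlier

/-- Exponential Suppression of Outlier Weights, Gaussian kernel `κ(x) = exp(−x²/σ²)`:
under the linear disagreement gap `D_k − D_i ≥ c₀·n` for all inliers `i ∈ I`, the SNAP
weight of the outlier `k` satisfies `w_k ≤ (1/(αn))·exp(−(c₀n/D_a)²/σ²)`. -/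
theorem snap_exponential_suppression_gaussian (n : ℕ)
    (d : Fin n → Fin n → ℝ)
    (hd_nonneg : ∀ i j, 0 ≤ d i j)
    (hd_diag : ∀ i, d i i = 0)
    (hDa : 0 < ∑ p, ∑ q, d p q)
    (I : Finset (Fin n)) (k : Fin n) (hk : k ∉ I)
    (α : ℝ) (hα : 0 < α) (hcard : α * n ≤ (I.card : ℝ)) (hαn : 0 < α * n)
    (c₀ : ℝ) (hc₀ : 0 < c₀)
    (hgap : ∀ i ∈ I, c₀ * n ≤ (∑ j, d k j) - (∑ j, d i j))
    (σ : ℝ) (hσ : 0 < σ) :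
    snapWeight n d (fun t => Real.exp (-t ^ 2 / σ ^ 2)) k
      ≤ (1 / (α * n)) * Real.exp (-((c₀ * n) / (∑ p, ∑ q, d p q)) ^ 2 / σ ^ 2) :=
  snap_exponential_suppression_gaussian_general n d hd_nonneg hDa I k α hcard hαn c₀ hc₀ hgap σ
end
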